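/- In a cobweb poset with level sequence F, the zeta matrix ζ (as a 0-1 matrix indexed by poset elements, ζ(x,y) = 1 iff x ≤ y) is the inverse of the Möbius matrix μ given by: μ(x,y) = [x=y] - [level(y)=level(x)+1] + [level(y)>level(x)+1]·(-1)^{level(y)-level(x)}·∏_{i=level(x)+1}^{level(y)-1}(i_F - 1); that is, ∑_{z} ζ(x,z)·μ(z,y) = [x=y] for all x, y in any finite truncation of the poset. -/

import Mathlib

/-- The cobweb poset with level sequence `F`, truncated to levels `0,…,n-1`:
level `k` has `F k` elements, and `x ≤ y` iff `x = y` or `x` lies on a strictly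
lower level than `y`. -/
def Cobweb (F : ℕ → ℕ) (n : ℕ) := Σ k : Fin n, Fin (F k)

namespace Cobweb

variable {F : ℕ → ℕ} {n : ℕ}

instance : Fintype (Cobweb F n) := inferInstanceAs (Fintype (Σ k : Fin n, Fin (F k)))
instance : DecidableEq (Cobweb F n) := inferInstanceAs (DecidableEq (Σ k : Fin n, Fin (F k)))

/-- The level (rank) of an element of the cobweb poset. -/
def lvl (x : Cobweb F n) : ℕ := (show Σ k : Fin n, Fin (F k) from x).fst

instance : PartialOrder (Cobweb F n) where
  le x y := x = y ∨ x.lvl < y.lvl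
  le_refl x := Or.inl rfl
  le_trans a b c hab hbc := by
    rcases hab with rfl | h
    · exact hbc
    · rcases hbc with rfl | h'
      · exact Or.inr h
      · exact Or.inr (h.trans h')
  le_antisymm a b hab hba := by
    rcases hab with rfl | h
    · rfl
    · rcases hba with rfl | h'
      · rfl
      · exact absurd (h.trans h') (lt_irrefl _)

instance : DecidableRel (α := Cobweb F n) (· ≤ ·) :=
  fun x y => decidable_of_iff (x = y ∨ x.lvl < y.lvl) Iff.rfl

instance : DecidableRel (α := Cobweb F n) (· < ·) :=
  fun x y => decidable_of_iff (x ≤ y ∧ ¬ y ≤ x) lt_iff_le_not_ge.symm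

end Cobweb

/-!
For `z` below `y` (levels `k < b`) the entry `μ(z, y)` depends only on `k`; write it `g k`,
and put `g k = 0` for `k ≥ b`.
Then `(ζμ)(x, y) = [x ≤ y] + g a + ∑_{a < k < b} F k · g k`, where `a` is the level of `x`.
Since `g (b - 1) = -1` and `g k = (1 - F (k + 1)) · g (k + 1)`, adding the terms from the top
level down keeps the partial sum `g k + ∑_{k < j < b} F j · g j` equal to `-1`, so the total is
`[x ≤ y] - [a < b] = [x = y]`.
-/

open Finset

section LevelMobius

variable {R : Type*} [CommRing R]

/-- The common value of `μ(z, y) - [z = y]` for `z` on level `k` and `y` on level `b`.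
For `k + 1 = b` the product is empty, which gives the entry `-1` of a covering pair. -/
def levelMobius (c : ℕ → R) (b k : ℕ) : R :=
  if k < b then (-1) ^ (b - k) * ∏ i ∈ Ioo k b, (c i - 1) else 0

theorem levelMobius_of_le (c : ℕ → R) {b k : ℕ} (h : b ≤ k) : levelMobius c b k = 0 :=
  if_neg h.not_gt

theorem sub_ite_add_ite_eq_add_levelMobius (c : ℕ → R) (d : R) (b k : ℕ) :
    d - (if k + 1 = b then 1 else 0) +
        (if k + 1 < b then (-1) ^ (b - k) * ∏ i ∈ Ioo k b, (c i - 1) else 0) =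
      d + levelMobius c b k := by
  unfold levelMobius
  rcases lt_trichotomy (k + 1) b with h | h | h
  · rw [if_neg h.ne, if_pos h, if_pos (by omega)]
    ring
  · subst h
    simp [Ioo_add_one_right_eq_Ioc, sub_eq_add_neg]
  · rw [if_neg h.ne', if_neg (by omega), if_neg (by omega)]
    ring

theorem levelMobius_eq_mul_succ (c : ℕ → R) {b k : ℕ} (h : k + 1 < b) :
    levelMobius c b k = (1 - c (k + 1)) * levelMobius c b (k + 1) := by
  have hIoo : Ioo k b = insert (k + 1) (Ioo (k + 1) b) := by
    rw [Ioo_insert_left h, Ico_add_one_left_eq_Ioo]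
  rw [levelMobius, levelMobius, if_pos (by omega), if_pos h, hIoo, prod_insert (by simp),
    show b - k = b - (k + 1) + 1 by omega]
  ring

/-- The Möbius recursion `μ(x, y) = -∑_{x < z ≤ y} μ(z, y)`, summed level by level. -/
theorem levelMobius_add_sum_Ioo (c : ℕ → R) {a b : ℕ} (hab : a < b) :
    levelMobius c b a + ∑ k ∈ Ioo a b, c k * levelMobius c b k = -1 := by
  obtain ⟨d, rfl⟩ := Nat.exists_eq_add_of_lt hab
  clear hab
  induction d generalizing a with
  | zero =>
    simp [levelMobius, Ioo_add_one_right_eq_Ioc]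
  | succ d ih =>
    have hlt : a + 1 < a + (d + 1) + 1 := by omega
    have ih' := ih (a := a + 1)
    rw [show a + 1 + d + 1 = a + (d + 1) + 1 by omega] at ih'
    rw [← Ico_add_one_left_eq_Ioo, ← Ioo_insert_left hlt, sum_insert (by simp),
      levelMobius_eq_mul_succ c hlt, ← ih']
    ring

theorem levelMobius_add_sum_Ioo_of_le (c : ℕ → R) {a b m : ℕ} (hbm : b ≤ m) :
    levelMobius c b a + ∑ k ∈ Ioo a m, c k * levelMobius c b k = if a < b then -1 else 0 := by
  have hsum : ∑ k ∈ Ioo a m, c k * levelMobius c b k = ∑ k ∈ Ioo a b, c k * levelMobius c b k :=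
    (sum_subset (Ioo_subset_Ioo_right hbm) fun k _ hk => by
      rw [levelMobius_of_le c (by simp_all), mul_zero]).symm
  split_ifs with hab
  · rw [hsum, levelMobius_add_sum_Ioo c hab]
  · rw [hsum, Ioo_eq_empty (by omega), sum_empty, levelMobius_of_le c (by omega), add_zero]

end LevelMobius

namespace Cobweb

variable {F : ℕ → ℕ} {n : ℕ}

theorem le_iff {x y : Cobweb F n} : x ≤ y ↔ x = y ∨ x.lvl < y.lvl := Iff.rfl

theorem lvl_lt (x : Cobweb F n) : x.lvl < n := x.1.isLt

theorem sum_comp_lvl {M : Type*} [AddCommMonoid M] (f : ℕ → M) :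
    ∑ z : Cobweb F n, f z.lvl = ∑ k ∈ range n, F k • f k := by
  rw [← Fin.sum_univ_eq_sum_range (fun k => F k • f k)]
  exact (Fintype.sum_sigma (fun z : Σ k : Fin n, Fin (F k) => f z.1)).trans (by simp)

theorem sum_zeta_mul_comp_lvl {R : Type*} [NonAssocSemiring R] (f : ℕ → R) (x : Cobweb F n) :
    ∑ z : Cobweb F n, (if x ≤ z then 1 else 0) * f z.lvl =
      f x.lvl + ∑ k ∈ Ioo x.lvl n, (F k : R) * f k := by
  have hzeta : ∀ z : Cobweb F n, (if x ≤ z then (1 : R) else 0) * f z.lvl =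
      (if z = x then f z.lvl else 0) + (if x.lvl < z.lvl then f z.lvl else 0) := by
    intro z
    by_cases hzx : z = x
    · subst hzx
      simp
    · simp [le_iff, hzx, Ne.symm hzx]
  have hIoo : Ioo x.lvl n = (range n).filter (x.lvl < ·) := by
    ext k
    simp only [mem_Ioo, mem_filter, mem_range]
    omega
  simp only [hzeta, sum_add_distrib, sum_ite_eq', mem_univ, if_true,
    sum_comp_lvl (fun k => if x.lvl < k then f k else 0), hIoo, sum_filter, smul_ite,
    nsmul_eq_mul, smul_zero]

end Cobweb

theorem stmt10_general (F : ℕ → ℕ) (n : ℕ) :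
    ∀ x y : Cobweb F n,
      (∑ z : Cobweb F n,
        (if x ≤ z then (1 : ℤ) else 0) *
          ((if z = y then (1 : ℤ) else 0) - (if z.lvl + 1 = y.lvl then 1 else 0) +
            (if z.lvl + 1 < y.lvl then
              (-1) ^ (y.lvl - z.lvl) * ∏ i ∈ Finset.Ioo z.lvl y.lvl, ((F i : ℤ) - 1)
            else 0))) = if x = y then 1 else 0 := by
  intro x y
  simp only [sub_ite_add_ite_eq_add_levelMobius (fun i => (F i : ℤ)), mul_add, sum_add_distrib,
    mul_boole, sum_ite_eq', mem_univ, if_true]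
  rw [Cobweb.sum_zeta_mul_comp_lvl (levelMobius (fun i => (F i : ℤ)) y.lvl),
    levelMobius_add_sum_Ioo_of_le _ (Cobweb.lvl_lt y).le]
  by_cases hxy : x = y
  · subst hxy
    simp
  · simp only [Cobweb.le_iff, hxy, false_or, if_false]
    split_ifs <;> norm_num

/-- The zeta matrix of a cobweb poset is inverse to the explicitly given Möbius matrix:
`∑_z ζ(x,z)·μ(z,y) = [x = y]`. -/
theorem stmt10 (F : ℕ → ℕ) (hF : ∀ k, 0 < F k) (n : ℕ) :
    ∀ x y : Cobweb F n,
      (∑ z : Cobweb F n,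
        (if x ≤ z then (1 : ℤ) else 0) *
          ((if z = y then (1 : ℤ) else 0) - (if z.lvl + 1 = y.lvl then 1 else 0) +
            (if z.lvl + 1 < y.lvl then
              (-1) ^ (y.lvl - z.lvl) * ∏ i ∈ Finset.Ioo z.lvl y.lvl, ((F i : ℤ) - 1)
            else 0))) = if x = y then 1 else 0 :=
  stmt10_general F n
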